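/- Let ℓ_n be even and consider a uniform random perfect matching (pairing) of ℓ_n half-edges, among which n₁ half-edges are 'degree-1' half-edges (each belonging to a distinct vertex of degree 1). The probability that no two degree-1 half-edges are paired together equals ∏_{i=1}^{n₁} (ℓ_n - n₁ - i + 1)/(ℓ_n - 2i + 1), and if n₁²/ℓ_n → λ ∈ [0,∞) while n₁/ℓ_n → 0, this probability converges to e^{-λ/2}. -/

import Mathlib

/-!
Conditioning on the partner of one degree-1 half-edge removes a pair and one degree-1 half-edge;
this recursion gives the product formula. Its `i`-th factor is `s / (s + a)` with
`a = n₁ - 1 - i` and `ℓ - 2 n₁ < s ≤ s + a ≤ ℓ`, and it lies between `exp (-a / s)` and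
`exp (-a / (s + a))`. Since `∑ a = (n₁² - n₁) / 2`, the product is squeezed between
`exp (-(n₁²/ℓ - n₁/ℓ) / (2 (1 - 2 n₁/ℓ)))` and `exp (-(n₁²/ℓ - n₁/ℓ) / 2)`, both tending to
`e^{-λ/2}`.
-/

open Filter

/-- A perfect matching (pairing) of `ℓ` half-edges: a fixed-point-free involution. -/
def IsPairing {ℓ : ℕ} (f : Equiv.Perm (Fin ℓ)) : Prop :=
  (∀ x, f x ≠ x) ∧ ∀ x, f (f x) = x

/-- The half-edges labelled `0, …, n₁ - 1` are the degree-1 half-edges; this is the event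
that no two of them are paired together. -/
def NoDegreeOnePair {ℓ : ℕ} (n₁ : ℕ) (f : Equiv.Perm (Fin ℓ)) : Prop :=
  ∀ x : Fin ℓ, (x : ℕ) < n₁ → ¬ ((f x : ℕ) < n₁)

open Equiv Finset Real Topology

def IsPairingAvoiding {α : Type*} (q : α → Prop) (f : Perm α) : Prop :=
  ∀ x, f x ≠ x ∧ f (f x) = x ∧ (q x → ¬ q (f x))

/-- `pairingCount L K` counts the pairings of `L` points in which no two of `K` marked points are
paired (`card_isPairingAvoiding`); the recursion conditions on the partner of a marked point, or
of any point if none is marked. -/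
def pairingCount : ℕ → ℕ → ℕ
  | 0, _ => 1
  | 1, _ => 0
  | L + 2, 0 => (L + 1) * pairingCount L 0
  | L + 2, K + 1 => (L + 1 - K) * pairingCount L K

section Cardinality

variable {α : Type*} [Finite α]

lemma Nat.card_subtype_and_ne {p : α → Prop} {a : α} (ha : p a) :
    Nat.card {x // p x ∧ x ≠ a} = Nat.card {x // p x} - 1 := by
  classical
  have := Fintype.ofFinite α
  rw [Nat.card_eq_fintype_card, Nat.card_eq_fintype_card, Fintype.card_subtype,
    Fintype.card_subtype, ← card_erase_of_mem (mem_filter.2 ⟨mem_univ a, ha⟩)]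
  congr 1
  ext x
  simp [and_comm]

lemma Nat.card_subtype_not (p : α → Prop) :
    Nat.card {x // ¬ p x} = Nat.card α - Nat.card {x // p x} := by
  classical
  have := Fintype.ofFinite α
  simp only [Nat.card_eq_fintype_card, Fintype.card_subtype_compl]

lemma Nat.card_subtype_ne (a : α) : Nat.card {x // x ≠ a} = Nat.card α - 1 := by
  simp [Nat.card_subtype_not (· = a)]

lemma Nat.card_subtype_ne_and_ne {a b : α} (hab : a ≠ b) :
    Nat.card {x // x ≠ a ∧ x ≠ b} = Nat.card α - 2 := by
  rw [Nat.card_subtype_and_ne (p := (· ≠ a)) hab.symm, Nat.card_subtype_ne]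
  omega

lemma Nat.card_subtype_subtype_ne_and_ne {p : α → Prop} {a b : α}
    (ha : p a) (hb : ¬ p b) :
    Nat.card {y : {x // x ≠ a ∧ x ≠ b} // p y} = Nat.card {x // p x} - 1 := by
  rw [← Nat.card_subtype_and_ne ha]
  refine Nat.card_congr ((Equiv.subtypeSubtypeEquivSubtypeInter _ p).trans
    (Equiv.subtypeEquivRight fun x => ?_))
  constructor
  · rintro ⟨⟨hxa, -⟩, hx⟩; exact ⟨hx, hxa⟩
  · rintro ⟨hx, hxa⟩; exact ⟨⟨hxa, fun h => hb (h ▸ hx)⟩, hx⟩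

end Cardinality

namespace IsPairingAvoiding

variable {α : Type*} {q : α → Prop} {f : Perm α} {a b : α}

lemma apply_eq_of_apply_eq (hf : IsPairingAvoiding q f) (hab : f a = b) : f b = a :=
  hab ▸ (hf a).2.1

lemma apply_ne_and_ne_iff (hf : IsPairingAvoiding q f) (hab : f a = b) (x : α) :
    (f x ≠ a ∧ f x ≠ b) ↔ (x ≠ a ∧ x ≠ b) :=
  calc (f x ≠ a ∧ f x ≠ b) ↔ (f x ≠ f b ∧ f x ≠ f a) := by rw [hf.apply_eq_of_apply_eq hab, hab]
    _ ↔ (x ≠ a ∧ x ≠ b) := by rw [f.injective.ne_iff, f.injective.ne_iff, and_comm]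

lemma subtypePerm (hf : IsPairingAvoiding q f) (hab : f a = b) :
    IsPairingAvoiding (fun y : {x // x ≠ a ∧ x ≠ b} => q y)
      (f.subtypePerm (hf.apply_ne_and_ne_iff hab)) := fun y =>
  ⟨fun h => (hf y).1 (congrArg Subtype.val h), Subtype.ext (hf y).2.1, (hf y).2.2⟩

end IsPairingAvoiding

section Extension

variable {α : Type*} [DecidableEq α] {a b : α} (g : Perm {x // x ≠ a ∧ x ≠ b})

lemma ofSubtype_mul_swap_apply_left : (Perm.ofSubtype g * swap a b) a = b := by
  simp [Perm.ofSubtype_apply_of_not_mem g (p := fun x => x ≠ a ∧ x ≠ b) (a := b) (by simp)]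

lemma ofSubtype_mul_swap_apply_right : (Perm.ofSubtype g * swap a b) b = a := by
  simp [Perm.ofSubtype_apply_of_not_mem g (p := fun x => x ≠ a ∧ x ≠ b) (a := a) (by simp)]

lemma ofSubtype_mul_swap_apply_coe (y : {x // x ≠ a ∧ x ≠ b}) :
    (Perm.ofSubtype g * swap a b) y = g y := by
  rw [Perm.mul_apply, swap_apply_of_ne_of_ne y.2.1 y.2.2, Perm.ofSubtype_apply_coe]

lemma isPairingAvoiding_ofSubtype_mul_swap {q : α → Prop} (hab : a ≠ b) (hq : ¬(q a ∧ q b))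
    (hg : IsPairingAvoiding (fun y : {x // x ≠ a ∧ x ≠ b} => q y) g) :
    IsPairingAvoiding q (Perm.ofSubtype g * swap a b) := by
  intro x
  by_cases hxa : x = a
  · subst hxa
    rw [ofSubtype_mul_swap_apply_left g, ofSubtype_mul_swap_apply_right g]
    exact ⟨hab.symm, rfl, fun ha hb => hq ⟨ha, hb⟩⟩
  by_cases hxb : x = b
  · subst hxb
    rw [ofSubtype_mul_swap_apply_right g, ofSubtype_mul_swap_apply_left g]
    exact ⟨hab, rfl, fun hb ha => hq ⟨ha, hb⟩⟩
  lift x to {x // x ≠ a ∧ x ≠ b} using ⟨hxa, hxb⟩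
  rw [ofSubtype_mul_swap_apply_coe, ofSubtype_mul_swap_apply_coe]
  exact ⟨fun h => (hg x).1 (Subtype.ext h), congrArg Subtype.val (hg x).2.1, (hg x).2.2⟩

end Extension

section Recursion

variable {α : Type*} {q : α → Prop}

def removePairEquiv [DecidableEq α] {a b : α} (hab : a ≠ b) (hq : ¬(q a ∧ q b)) :
    {f : Perm α // IsPairingAvoiding q f ∧ f a = b} ≃
      {g : Perm {x // x ≠ a ∧ x ≠ b} //
        IsPairingAvoiding (fun y : {x // x ≠ a ∧ x ≠ b} => q y) g} where
  toFun f := ⟨f.1.subtypePerm (f.2.1.apply_ne_and_ne_iff f.2.2), f.2.1.subtypePerm f.2.2⟩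
  invFun g := ⟨Perm.ofSubtype g.1 * swap a b,
    isPairingAvoiding_ofSubtype_mul_swap g.1 hab hq g.2, ofSubtype_mul_swap_apply_left g.1⟩
  left_inv := by
    rintro ⟨f, hf, hfa⟩
    ext x
    by_cases hxa : x = a
    · subst hxa; simp [ofSubtype_mul_swap_apply_left, hfa]
    by_cases hxb : x = b
    · subst hxb; simp [ofSubtype_mul_swap_apply_right, hf.apply_eq_of_apply_eq hfa]
    lift x to {x // x ≠ a ∧ x ≠ b} using ⟨hxa, hxb⟩
    simp [ofSubtype_mul_swap_apply_coe]
  right_inv := by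
    rintro ⟨g, hg⟩
    ext y
    simp [ofSubtype_mul_swap_apply_coe]

lemma card_isPairingAvoiding_eq_mul [Finite α] (a : α) {c : ℕ}
    (hc : ∀ b, b ≠ a → ¬(q a ∧ q b) →
      Nat.card {g : Perm {x // x ≠ a ∧ x ≠ b} //
        IsPairingAvoiding (fun y : {x // x ≠ a ∧ x ≠ b} => q y) g} = c) :
    Nat.card {f : Perm α // IsPairingAvoiding q f}
      = Nat.card {b // b ≠ a ∧ ¬(q a ∧ q b)} * c := by
  classical
  have := Fintype.ofFinite α
  let partner : {f : Perm α // IsPairingAvoiding q f} ≃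
      Σ b : {b // b ≠ a ∧ ¬(q a ∧ q b)}, {f : Perm α // IsPairingAvoiding q f ∧ f a = b} :=
    { toFun := fun f => ⟨⟨f.1 a, (f.2 a).1, fun h => (f.2 a).2.2 h.1 h.2⟩, f.1, f.2, rfl⟩
      invFun := fun F => ⟨F.2.1, F.2.2.1⟩
      left_inv := fun f => rfl
      right_inv := by
        rintro ⟨b, f, hf, hfa⟩
        exact Sigma.subtype_ext (Subtype.ext hfa) rfl }
  rw [Nat.card_congr partner, Nat.card_sigma, Nat.card_eq_fintype_card (α := Subtype _),
    ← smul_eq_mul, ← card_univ, ← sum_const]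
  refine sum_congr rfl fun b _ => ?_
  rw [Nat.card_congr (removePairEquiv b.2.1.symm b.2.2), hc b b.2.1 b.2.2]

end Recursion

theorem card_isPairingAvoiding {α : Type*} [Finite α] (q : α → Prop) :
    Nat.card {f : Perm α // IsPairingAvoiding q f}
      = pairingCount (Nat.card α) (Nat.card {x // q x}) := by
  induction h : Nat.card α using Nat.twoStepInduction generalizing α with
  | zero =>
    have : IsEmpty α := Finite.card_eq_zero_iff.mp h
    rw [pairingCount, Nat.card_eq_one_iff_unique]
    exact ⟨inferInstance, ⟨⟨1, fun x => isEmptyElim x⟩⟩⟩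
  | one =>
    obtain ⟨_, ⟨x⟩⟩ := Nat.card_eq_one_iff_unique.mp h
    have : IsEmpty {f : Perm α // IsPairingAvoiding q f} :=
      ⟨fun f => (f.2 x).1 (Subsingleton.elim _ _)⟩
    rw [pairingCount, Nat.card_of_isEmpty]
  | more L ih _ =>
    have hrest : ∀ a b : α, a ≠ b → Nat.card {x // x ≠ a ∧ x ≠ b} = L := fun a b hab => by
      rw [Nat.card_subtype_ne_and_ne hab, h]; rfl
    by_cases hq : ∃ a, q a
    · obtain ⟨a, ha⟩ := hq
      obtain ⟨K, hK⟩ : ∃ K, Nat.card {x // q x} = K + 1 :=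
        Nat.exists_eq_add_one.mpr (Nat.card_pos_iff.mpr ⟨⟨⟨a, ha⟩⟩, inferInstance⟩)
      rw [card_isPairingAvoiding_eq_mul a (c := pairingCount L K), hK, pairingCount]
      · congr 1
        have hpartner : ∀ b, (b ≠ a ∧ ¬(q a ∧ q b)) ↔ ¬ q b := fun b =>
          ⟨fun h hb => h.2 ⟨ha, hb⟩, fun hb => ⟨fun h => hb (h ▸ ha), fun h => hb h.2⟩⟩
        rw [Nat.card_congr (Equiv.subtypeEquivRight hpartner), Nat.card_subtype_not, h, hK]
        omega
      · intro b _ hab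
        have hb : ¬ q b := fun hb => hab ⟨ha, hb⟩
        rw [ih _ (hrest a b (fun h => hb (h ▸ ha))), Nat.card_subtype_subtype_ne_and_ne ha hb, hK]
        rfl
    · replace hq : ∀ x, ¬ q x := not_exists.mp hq
      obtain ⟨a⟩ : Nonempty α := (Nat.card_pos_iff.mp (by omega)).1
      rw [card_isPairingAvoiding_eq_mul a (c := pairingCount L 0)]
      · simp only [hq, false_and, not_false_eq_true, and_true]
        rw [Nat.card_subtype_ne, h, Nat.card_of_isEmpty, pairingCount]
        rfl
      · intro b hba _
        rw [ih _ (hrest a b hba.symm)]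
        simp [hq]

lemma card_isPairing_and_noDegreeOnePair {L K : ℕ} (hKL : K ≤ L) :
    Nat.card {f : Perm (Fin L) // IsPairing f ∧ NoDegreeOnePair K f} = pairingCount L K := by
  have hiff : ∀ f : Perm (Fin L),
      IsPairing f ∧ NoDegreeOnePair K f ↔ IsPairingAvoiding (fun x : Fin L => (x : ℕ) < K) f :=
    fun f => by simp only [IsPairing, NoDegreeOnePair, IsPairingAvoiding, forall_and, and_assoc]
  rw [Nat.card_congr (Equiv.subtypeEquivRight hiff), card_isPairingAvoiding,
    Nat.card_eq_fintype_card, Nat.card_eq_fintype_card, Fintype.card_fin,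
    Fintype.card_fin_lt_of_le hKL]

lemma card_isPairing (L : ℕ) :
    Nat.card {f : Perm (Fin L) // IsPairing f} = pairingCount L 0 := by
  have hiff : ∀ f : Perm (Fin L), IsPairing f ↔ IsPairingAvoiding (fun _ : Fin L => False) f :=
    fun f => by simp only [IsPairing, IsPairingAvoiding, forall_and, false_imp_iff, and_true]
  rw [Nat.card_congr (Equiv.subtypeEquivRight hiff), card_isPairingAvoiding, Nat.card_fin,
    Nat.card_of_isEmpty]

lemma pairingCount_zero_pos {L : ℕ} (hL : Even L) : 0 < pairingCount L 0 := by
  obtain ⟨m, rfl⟩ := hL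
  induction m with
  | zero => simp [pairingCount]
  | succ m ih =>
    rw [show m + 1 + (m + 1) = m + m + 2 by ring, pairingCount]
    positivity

noncomputable def noPairProb (L K : ℕ) : ℝ :=
  ∏ i ∈ range K, (((L : ℝ) - K - i) / ((L : ℝ) - 2 * i - 1))

lemma pairingCount_div_pairingCount_zero {L K : ℕ} (hL : Even L) (hKL : 2 * K ≤ L) :
    (pairingCount L K : ℝ) / pairingCount L 0 = noPairProb L K := by
  induction K generalizing L with
  | zero => simp [noPairProb, (pairingCount_zero_pos hL).ne']
  | succ K ih =>
    obtain ⟨L, rfl⟩ : ∃ L', L = L' + 2 := ⟨L - 2, by omega⟩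
    have hL' : Even L := by simpa [Nat.even_add] using hL
    rw [pairingCount, pairingCount, Nat.cast_mul, Nat.cast_mul, mul_div_mul_comm,
      ih hL' (by omega), noPairProb, noPairProb, prod_range_succ', mul_comm]
    congr 1
    · refine prod_congr rfl fun i _ => ?_
      push_cast
      ring_nf
    · rw [Nat.cast_sub (by omega)]
      push_cast
      ring_nf

lemma exp_neg_div_le_div_add {a s : ℝ} (ha : 0 ≤ a) (hs : 0 < s) :
    exp (-(a / s)) ≤ s / (s + a) := by
  have hpos : 0 < 1 + a / s := by positivity
  calc exp (-(a / s)) = (exp (a / s))⁻¹ := exp_neg _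
    _ ≤ (1 + a / s)⁻¹ := by gcongr; linarith [add_one_le_exp (a / s)]
    _ = s / (s + a) := by field_simp

lemma div_add_le_exp_neg_div {a s : ℝ} (ha : 0 ≤ a) (hs : 0 < s) :
    s / (s + a) ≤ exp (-(a / (s + a))) :=
  calc s / (s + a) = 1 - a / (s + a) := by field_simp; ring
    _ ≤ exp (-(a / (s + a))) := one_sub_le_exp_neg _

lemma prod_range_exp_neg_div (K : ℕ) (M : ℝ) :
    ∏ i ∈ range K, exp (-(((K : ℝ) - 1 - i) / M)) = exp (-(((K : ℝ) ^ 2 - K) / 2 / M)) := by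
  have hgauss : ∀ n : ℕ, ∑ i ∈ range n, (i : ℝ) = ((n : ℝ) ^ 2 - n) / 2 := by
    intro n
    induction n with
    | zero => simp
    | succ n ih => rw [sum_range_succ, ih]; push_cast; ring
  have hsum : ∑ i ∈ range K, ((K : ℝ) - 1 - i) = ((K : ℝ) ^ 2 - K) / 2 := by
    rw [sum_sub_distrib, sum_const, card_range, nsmul_eq_mul, hgauss]; ring
  rw [← exp_sum, sum_neg_distrib, ← sum_div, hsum]

lemma noPairProb_le (L K : ℕ) (hKL : 2 * K ≤ L) :
    noPairProb L K ≤ exp (-(((K : ℝ) ^ 2 / L - K / L) / 2)) := by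
  have hKL' : 2 * (K : ℝ) ≤ L := by exact_mod_cast hKL
  calc noPairProb L K ≤ ∏ i ∈ range K, exp (-(((K : ℝ) - 1 - i) / L)) := by
        refine prod_le_prod (fun i hi => ?_) (fun i hi => ?_)
        · have hi : (i : ℝ) + 1 ≤ K := by exact_mod_cast mem_range.mp hi
          exact div_nonneg (by linarith) (by linarith)
        · have hi : (i : ℝ) + 1 ≤ K := by exact_mod_cast mem_range.mp hi
          have hsplit : (L : ℝ) - 2 * i - 1 = (L - K - i) + (K - 1 - i) := by ring
          have ha : (0 : ℝ) ≤ K - 1 - i := by linarith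
          have hs : (0 : ℝ) < L - K - i := by linarith
          have hsa : (L : ℝ) - K - i + (K - 1 - i) ≤ L := by
            linarith [(i.cast_nonneg : (0 : ℝ) ≤ i)]
          rw [hsplit]
          refine (div_add_le_exp_neg_div ha hs).trans ?_
          gcongr
    _ = exp (-(((K : ℝ) ^ 2 / L - K / L) / 2)) := by
        rw [prod_range_exp_neg_div]; ring_nf

lemma exp_le_noPairProb (L K : ℕ) (hKL : 2 * K ≤ L) (hu : (K : ℝ) / L < 1 / 2) :
    exp (-(((K : ℝ) ^ 2 / L - K / L) / (2 * (1 - 2 * (K / L))))) ≤ noPairProb L K := by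
  rcases Nat.eq_zero_or_pos L with rfl | hL
  · obtain rfl : K = 0 := by omega
    simp [noPairProb]
  have hL' : (0 : ℝ) < L := by exact_mod_cast hL
  have hgap : 0 < (L : ℝ) - 2 * K := by
    rw [div_lt_iff₀ hL'] at hu; linarith
  calc exp (-(((K : ℝ) ^ 2 / L - K / L) / (2 * (1 - 2 * (K / L)))))
        = ∏ i ∈ range K, exp (-(((K : ℝ) - 1 - i) / (L - 2 * K))) := by
        rw [prod_range_exp_neg_div]; congr 2; field_simp
    _ ≤ noPairProb L K := by
        refine prod_le_prod (fun i _ => (exp_pos _).le) (fun i hi => ?_)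
        have hi : (i : ℝ) + 1 ≤ K := by exact_mod_cast mem_range.mp hi
        have hsplit : (L : ℝ) - 2 * i - 1 = (L - K - i) + (K - 1 - i) := by ring
        rw [hsplit]
        have ha : (0 : ℝ) ≤ K - 1 - i := by linarith
        have hs : (L : ℝ) - 2 * K < L - K - i := by linarith
        refine le_trans ?_ (exp_neg_div_le_div_add ha (hgap.trans hs))
        gcongr

lemma tendsto_noPairProb {ℓ n₁ : ℕ → ℕ} (hle : ∀ n, 2 * n₁ n ≤ ℓ n) {lam : ℝ}
    (h1 : Tendsto (fun n => (n₁ n : ℝ) ^ 2 / (ℓ n : ℝ)) atTop (𝓝 lam))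
    (h2 : Tendsto (fun n => (n₁ n : ℝ) / (ℓ n : ℝ)) atTop (𝓝 0)) :
    Tendsto (fun n => noPairProb (ℓ n) (n₁ n)) atTop (𝓝 (exp (-lam / 2))) := by
  have hdiff := h1.sub h2
  rw [sub_zero] at hdiff
  have hupper : Tendsto (fun n => exp (-(((n₁ n : ℝ) ^ 2 / ℓ n - n₁ n / ℓ n) / 2)))
      atTop (𝓝 (exp (-lam / 2))) := by
    simpa [neg_div] using ((hdiff.div_const 2).neg).rexp
  have hlower : Tendsto (fun n => exp (-(((n₁ n : ℝ) ^ 2 / ℓ n - n₁ n / ℓ n) /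
      (2 * (1 - 2 * (n₁ n / ℓ n)))))) atTop (𝓝 (exp (-lam / 2))) := by
    have hden : Tendsto (fun n => 2 * (1 - 2 * ((n₁ n : ℝ) / ℓ n))) atTop (𝓝 2) := by
      simpa using ((h2.const_mul 2).const_sub 1).const_mul 2
    simpa [neg_div] using ((hdiff.div hden two_ne_zero).neg).rexp
  refine tendsto_of_tendsto_of_tendsto_of_le_of_le' hlower hupper ?_
    (Eventually.of_forall fun n => noPairProb_le _ _ (hle n))
  filter_upwards [h2.eventually_lt_const one_half_pos] with n hn
  exact exp_le_noPairProb _ _ (hle n) hn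

theorem no_line_of_length_two_probability_general
    (ℓ n₁ : ℕ → ℕ) (heven : ∀ n, Even (ℓ n)) (hle : ∀ n, 2 * n₁ n ≤ ℓ n)
    (lam : ℝ)
    (h1 : Tendsto (fun n => (n₁ n : ℝ) ^ 2 / (ℓ n : ℝ)) atTop (nhds lam))
    (h2 : Tendsto (fun n => (n₁ n : ℝ) / (ℓ n : ℝ)) atTop (nhds 0)) :
    (∀ n : ℕ,
      (Nat.card {f : Equiv.Perm (Fin (ℓ n)) // IsPairing f ∧ NoDegreeOnePair (n₁ n) f} : ℝ)
          / (Nat.card {f : Equiv.Perm (Fin (ℓ n)) // IsPairing f} : ℝ)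
        = ∏ i ∈ Finset.range (n₁ n),
            (((ℓ n : ℝ) - n₁ n - i) / ((ℓ n : ℝ) - 2 * i - 1))) ∧
    Tendsto (fun n =>
      (Nat.card {f : Equiv.Perm (Fin (ℓ n)) // IsPairing f ∧ NoDegreeOnePair (n₁ n) f} : ℝ)
          / (Nat.card {f : Equiv.Perm (Fin (ℓ n)) // IsPairing f} : ℝ))
      atTop (nhds (Real.exp (-lam / 2))) := by
  have hratio : ∀ n,
      (Nat.card {f : Equiv.Perm (Fin (ℓ n)) // IsPairing f ∧ NoDegreeOnePair (n₁ n) f} : ℝ)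
          / (Nat.card {f : Equiv.Perm (Fin (ℓ n)) // IsPairing f} : ℝ)
        = noPairProb (ℓ n) (n₁ n) := fun n => by
    rw [card_isPairing_and_noDegreeOnePair (by linarith [hle n]), card_isPairing,
      pairingCount_div_pairingCount_zero (heven n) (hle n)]
  exact ⟨hratio, (tendsto_noPairProb hle h1 h2).congr fun n => (hratio n).symm⟩

/-- In a uniform pairing of `ℓ_n` (even) half-edges among which `n₁` are degree-1
half-edges, the probability that no two degree-1 half-edges are paired together equals
`∏_{i=1}^{n₁} (ℓ_n - n₁ - i + 1)/(ℓ_n - 2i + 1)`; if `n₁²/ℓ_n → λ` and `n₁/ℓ_n → 0`,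
this probability converges to `e^{-λ/2}`. -/
theorem no_line_of_length_two_probability
    (ℓ n₁ : ℕ → ℕ) (heven : ∀ n, Even (ℓ n)) (hle : ∀ n, 2 * n₁ n ≤ ℓ n)
    (lam : ℝ) (hlam : 0 ≤ lam)
    (h1 : Tendsto (fun n => (n₁ n : ℝ) ^ 2 / (ℓ n : ℝ)) atTop (nhds lam))
    (h2 : Tendsto (fun n => (n₁ n : ℝ) / (ℓ n : ℝ)) atTop (nhds 0)) :
    (∀ n : ℕ,
      (Nat.card {f : Equiv.Perm (Fin (ℓ n)) // IsPairing f ∧ NoDegreeOnePair (n₁ n) f} : ℝ)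
          / (Nat.card {f : Equiv.Perm (Fin (ℓ n)) // IsPairing f} : ℝ)
        = ∏ i ∈ Finset.range (n₁ n),
            (((ℓ n : ℝ) - n₁ n - i) / ((ℓ n : ℝ) - 2 * i - 1))) ∧
    Tendsto (fun n =>
      (Nat.card {f : Equiv.Perm (Fin (ℓ n)) // IsPairing f ∧ NoDegreeOnePair (n₁ n) f} : ℝ)
          / (Nat.card {f : Equiv.Perm (Fin (ℓ n)) // IsPairing f} : ℝ))
      atTop (nhds (Real.exp (-lam / 2))) :=
  no_line_of_length_two_probability_general ℓ n₁ heven hle lam h1 h2
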